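/- Let (X,Σ,μ) be a measure space, 1 ≤ p < ∞, and let 𝓕 ⊆ Λ^p(X) be uniformly essentially bounded, i.e., there exists M_0 > 0 such that |f| ≤ M_0 μ-almost everywhere for every f ∈ 𝓕. Then 𝓕 is totally bounded with respect to the F-norm distance d(f,g) = ν_p(f−g) if and only if 𝓕 is totally bounded in L^p(X) with respect to the L^p norm distance. -/

import Mathlib

open MeasureTheory ENNReal Filter Topology

/-- The F-norm `ν_p(g) = (∫ min(|g|,1)^p dμ)^{1/p}` of the asymptotic `L_p` space. -/
noncomputable def nuF {X : Type*} [MeasurableSpace X] (μ : Measure X) (p : ℝ) (g : X → ℝ) :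
    ℝ≥0∞ :=
  (∫⁻ x, ENNReal.ofReal (min |g x| 1 ^ p) ∂μ) ^ (1 / p)

/-- The `L^p` norm `(∫ |g|^p dμ)^{1/p}`. -/
noncomputable def lpNorm {X : Type*} [MeasurableSpace X] (μ : Measure X) (p : ℝ) (g : X → ℝ) :
    ℝ≥0∞ :=
  (∫⁻ x, ENNReal.ofReal (|g x| ^ p) ∂μ) ^ (1 / p)

/-- Membership in the asymptotic `L_p` space `Λ^p(X)`. -/
def MemLambda {X : Type*} [MeasurableSpace X] (μ : Measure X) (p : ℝ) (f : X → ℝ) : Prop :=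
  Measurable f ∧ ∫⁻ x, ENNReal.ofReal (min |f x| 1 ^ p) ∂μ < ⊤

/-- Membership in `L^p(X)`. -/
def MemLp' {X : Type*} [MeasurableSpace X] (μ : Measure X) (p : ℝ) (f : X → ℝ) : Prop :=
  Measurable f ∧ ∫⁻ x, ENNReal.ofReal (|f x| ^ p) ∂μ < ⊤

/-- The truncation map `T_M(t) = max(-M, min(t, M))`. -/
def trunc (M : ℝ) (t : ℝ) : ℝ := max (-M) (min t M)

/-- A family `F` is totally bounded with respect to a distance `d` if for every `ε > 0`
there are finitely many functions such that every `f ∈ F` is within `ε` of one of them. -/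
def TotallyBoundedDist {X : Type*} (d : (X → ℝ) → (X → ℝ) → ℝ≥0∞) (F : Set (X → ℝ)) : Prop :=
  ∀ ε : ℝ≥0∞, 0 < ε → ∃ G : Finset (X → ℝ), ∀ f ∈ F, ∃ g ∈ G, d f g < ε

/-!
Since `min |t| 1 ≤ |t|`, `ν_p ≤ ‖·‖_{L^p}`, so an `L^p`-net is a `ν_p`-net. Conversely, if
`|h| ≤ c` with `c ≥ 1` then `|h| ≤ c · min |h| 1`, so `‖h‖_{L^p} ≤ c · ν_p(h)`. A `ν_p`-net for
a family bounded by `M₀` is turned into an `L^p`-net by truncating its elements at level `M₀`: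
truncation is `1`-Lipschitz and fixes the members of the family, so it does not increase
`ν_p(f - g)`, while it makes `f - g` bounded by `2 M₀`.
-/

section Truncation

lemma abs_trunc_sub_trunc_le (M a b : ℝ) : |trunc M a - trunc M b| ≤ |a - b| := by
  refine (abs_max_sub_max_le_max _ _ _ _).trans ?_
  simp only [sub_self, abs_zero]
  refine max_le (abs_nonneg _) ((abs_min_sub_min_le_max _ _ _ _).trans ?_)
  simp

lemma trunc_of_abs_le {M a : ℝ} (ha : |a| ≤ M) : trunc M a = a := by
  rw [abs_le] at ha
  rw [trunc, min_eq_left ha.2, max_eq_right ha.1]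

lemma abs_trunc_le {M : ℝ} (hM : 0 ≤ M) (a : ℝ) : |trunc M a| ≤ M := by
  rw [abs_le, trunc]
  exact ⟨le_max_left _ _, max_le (by linarith) (min_le_right _ _)⟩

end Truncation

section Norms

variable {X : Type*} [MeasurableSpace X] {μ : Measure X} {p : ℝ}

lemma nuF_mono_ae (hp : 0 ≤ p) {f g : X → ℝ} (h : ∀ᵐ x ∂μ, |f x| ≤ |g x|) :
    nuF μ p f ≤ nuF μ p g := by
  refine ENNReal.rpow_le_rpow (lintegral_mono_ae ?_) (by positivity)
  filter_upwards [h] with x hx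
  exact ENNReal.ofReal_le_ofReal <| Real.rpow_le_rpow (le_min (abs_nonneg _) zero_le_one)
    (min_le_min hx le_rfl) hp

lemma nuF_le_lpNorm (hp : 0 ≤ p) (f : X → ℝ) : nuF μ p f ≤ lpNorm μ p f := by
  refine ENNReal.rpow_le_rpow (lintegral_mono fun x => ?_) (by positivity)
  exact ENNReal.ofReal_le_ofReal <| Real.rpow_le_rpow (le_min (abs_nonneg _) zero_le_one)
    (min_le_left _ _) hp

lemma abs_rpow_le_rpow_mul_min_rpow (hp : 0 ≤ p) {c t : ℝ} (hc : 1 ≤ c) (ht : |t| ≤ c) :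
    |t| ^ p ≤ c ^ p * min |t| 1 ^ p := by
  rcases le_or_gt |t| 1 with h1 | h1
  · rw [min_eq_left h1]
    exact le_mul_of_one_le_left (by positivity) (Real.one_le_rpow hc hp)
  · rw [min_eq_right h1.le, Real.one_rpow, mul_one]
    exact Real.rpow_le_rpow (abs_nonneg _) ht hp

lemma lpNorm_le_mul_nuF (hp : 0 < p) {c : ℝ} (hc : 1 ≤ c) {f : X → ℝ}
    (h : ∀ᵐ x ∂μ, |f x| ≤ c) : lpNorm μ p f ≤ ENNReal.ofReal c * nuF μ p f := by
  have hc0 : 0 ≤ c := zero_le_one.trans hc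
  have hint : ∫⁻ x, ENNReal.ofReal (|f x| ^ p) ∂μ ≤
      ENNReal.ofReal (c ^ p) * ∫⁻ x, ENNReal.ofReal (min |f x| 1 ^ p) ∂μ := by
    rw [← lintegral_const_mul' _ _ ENNReal.ofReal_ne_top]
    refine lintegral_mono_ae ?_
    filter_upwards [h] with x hx
    rw [← ENNReal.ofReal_mul (by positivity)]
    exact ENNReal.ofReal_le_ofReal (abs_rpow_le_rpow_mul_min_rpow hp.le hc hx)
  calc lpNorm μ p f
      ≤ (ENNReal.ofReal (c ^ p) * ∫⁻ x, ENNReal.ofReal (min |f x| 1 ^ p) ∂μ) ^ (1 / p) :=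
        ENNReal.rpow_le_rpow hint (by positivity)
    _ = ENNReal.ofReal c * nuF μ p f := by
        rw [ENNReal.mul_rpow_of_nonneg _ _ (by positivity), nuF,
          ← ENNReal.ofReal_rpow_of_nonneg hc0 hp.le, ← ENNReal.rpow_mul,
          mul_one_div_cancel hp.ne', ENNReal.rpow_one]

lemma lpNorm_sub_trunc_le (hp : 0 < p) {M : ℝ} (hM : 0 ≤ M) {f : X → ℝ}
    (hf : ∀ᵐ x ∂μ, |f x| ≤ M) (g : X → ℝ) :
    lpNorm μ p (f - trunc M ∘ g) ≤ ENNReal.ofReal (2 * M + 1) * nuF μ p (f - g) := by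
  have hpt : ∀ᵐ x ∂μ, |f x - trunc M (g x)| ≤ |f x - g x| ∧
      |f x - trunc M (g x)| ≤ 2 * M + 1 := by
    filter_upwards [hf] with x hx
    refine ⟨?_, ?_⟩
    · simpa only [trunc_of_abs_le hx] using abs_trunc_sub_trunc_le M (f x) (g x)
    · linarith [abs_sub (f x) (trunc M (g x)), abs_trunc_le hM (g x)]
  calc lpNorm μ p (f - trunc M ∘ g)
      ≤ ENNReal.ofReal (2 * M + 1) * nuF μ p (f - trunc M ∘ g) :=
        lpNorm_le_mul_nuF hp (by linarith) (hpt.mono fun _ hx => hx.2)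
    _ ≤ ENNReal.ofReal (2 * M + 1) * nuF μ p (f - g) :=
        mul_le_mul_right (nuF_mono_ae hp.le (hpt.mono fun _ hx => hx.1)) _

end Norms

lemma TotallyBoundedDist.of_le_mul {X : Type*} {d d' : (X → ℝ) → (X → ℝ) → ℝ≥0∞}
    {F : Set (X → ℝ)} {C : ℝ≥0∞} (hC : C ≠ ⊤) (φ : (X → ℝ) → X → ℝ)
    (h : ∀ f ∈ F, ∀ g, d' f (φ g) ≤ C * d f g) (hF : TotallyBoundedDist d F) :
    TotallyBoundedDist d' F := by
  classical
  intro ε hε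
  obtain ⟨G, hG⟩ := hF (ε / C) (ENNReal.div_pos hε.ne' hC)
  refine ⟨G.image φ, fun f hf => ?_⟩
  obtain ⟨g, hgG, hfg⟩ := hG f hf
  exact ⟨φ g, Finset.mem_image_of_mem φ hgG,
    (h f hf g).trans_lt (ENNReal.mul_lt_of_lt_div' hfg)⟩

theorem stmt18_general {X : Type*} [MeasurableSpace X] (μ : Measure X) (p : ℝ) (hp : 1 ≤ p)
    (F : Set (X → ℝ))
    (M₀ : ℝ) (hM₀ : 0 < M₀) (hbd : ∀ f ∈ F, ∀ᵐ x ∂μ, |f x| ≤ M₀) :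
    TotallyBoundedDist (fun f g => nuF μ p (f - g)) F ↔
      TotallyBoundedDist (fun u v => lpNorm μ p (u - v)) F := by
  have hp0 : 0 < p := zero_lt_one.trans_le hp
  constructor
  · exact TotallyBoundedDist.of_le_mul ENNReal.ofReal_ne_top (trunc M₀ ∘ ·)
      fun f hf g => lpNorm_sub_trunc_le hp0 hM₀.le (hbd f hf) g
  · exact TotallyBoundedDist.of_le_mul ENNReal.one_ne_top id
      fun f _ g => by simpa only [one_mul, id] using nuF_le_lpNorm hp0.le (f - g)

theorem stmt18 {X : Type*} [MeasurableSpace X] (μ : Measure X) (p : ℝ) (hp : 1 ≤ p)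
    (F : Set (X → ℝ)) (hF : ∀ f ∈ F, MemLambda μ p f)
    (M₀ : ℝ) (hM₀ : 0 < M₀) (hbd : ∀ f ∈ F, ∀ᵐ x ∂μ, |f x| ≤ M₀) :
    TotallyBoundedDist (fun f g => nuF μ p (f - g)) F ↔
      TotallyBoundedDist (fun u v => lpNorm μ p (u - v)) F :=
  stmt18_general μ p hp F M₀ hM₀ hbd
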